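/- arXiv:1801.00450 — 2 statements merged into one kernel-verified Lean document; each statement's English description precedes it below -/
import Mathlib

section
/- Let A be a constant M×M matrix and let Ũ*(ξ,t) = U* + t(ξI − A)g* and F̃*(ξ,t) = F* + tA(ξI − A)g*, with analogous expansions Ũ_R, F̃_R built from U_R, F(U_R), A_R = A(U_R), g_R. If F* − F(U_R) = S_R(U* − U_R) (the zeroth-order RH condition) and the shock trajectory is x_R(t) = S_R t + ½ S_R′ t², then the generalized Rankine–Hugoniot condition F̃*(S_R,t) − F̃_R(S_R,t) = (dx_R/dt)(Ũ*(S_R,t) − Ũ_R(S_R,t)) holds to first order in t if and only if (S_R I − A)² g* + S_R′(U* − U_R) = (S_R I − A_R)² g_R. -/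
/-!
Both sides of the generalized Rankine–Hugoniot condition are polynomials in `t`: the flux jump is
affine, and `ẋ_R(t) = S_R + S_R′ t` times the affine state jump is quadratic. Agreement up to `O(t²)`
means the constant and linear coefficients match. The constant one is the zeroth-order RH condition;
the linear one reads `A(S_R − A)g* − A_R(S_R − A_R)g_R = S_R((S_R − A)g* − (S_R − A_R)g_R) + S_R′(U* − U_R)`,
which is the claimed identity once `(S I − B)² g = S (S I − B) g − B (S I − B) g`.
-/

open Matrix

theorem Matrix.sq_smul_one_sub_mulVec {n R : Type*} [Fintype n] [DecidableEq n] [CommRing R]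
    (s : R) (B : Matrix n n R) (g : n → R) :
    ((s • 1 - B) ^ 2) *ᵥ g = s • ((s • 1 - B) *ᵥ g) - B *ᵥ ((s • 1 - B) *ᵥ g) := by
  rw [sq, ← Matrix.mulVec_mulVec, Matrix.sub_mulVec, Matrix.smul_mulVec, Matrix.one_mulVec]

theorem deriv_linear_add_half_mul_sq (a b t : ℝ) :
    deriv (fun s : ℝ => a * s + 1 / 2 * b * s ^ 2) t = a + b * t := by
  have h : HasDerivAt (fun s : ℝ => a * s + 1 / 2 * b * s ^ 2) (a * 1 + 1 / 2 * b * (2 * t)) t :=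
    ((hasDerivAt_id t).const_mul a).add (by simpa using (hasDerivAt_pow 2 t).const_mul (1 / 2 * b))
  rw [h.deriv]
  ring

/-- Coefficients are compared by evaluating at `t = 0` and `t = ±1`. -/
theorem exists_forall_add_smul_eq_smul_add_sq_smul_iff {K V : Type*} [Field K] [NeZero (2 : K)]
    [AddCommGroup V] [Module K V] (a₀ a₁ b₀ b₁ : V) (s s' : K) :
    (∃ c : V, ∀ t : K, a₀ + t • a₁ = (s + s' * t) • (b₀ + t • b₁) + t ^ 2 • c) ↔
      a₀ = s • b₀ ∧ a₁ = s • b₁ + s' • b₀ := by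
  constructor
  · rintro ⟨c, hc⟩
    have h₀ := hc 0
    have h₁ := hc 1
    have h₂ := hc (-1)
    refine ⟨by simpa using h₀, ?_⟩
    have h₁₂ : (2 : K) • a₁ = (2 : K) • (s • b₁ + s' • b₀) := by
      linear_combination (norm := module) h₁ - h₂
    exact smul_right_injective V two_ne_zero h₁₂
  · rintro ⟨rfl, rfl⟩
    exact ⟨-(s' • b₁), fun t => by module⟩

/-- The generalized Rankine–Hugoniot condition at the right extremal wave
holds to first order in `t` (i.e. up to an `O(t²)` remainder with constant coefficient)
iff `(S_R I − A)² g* + S_R′ (U* − U_R) = (S_R I − A_R)² g_R`. -/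
theorem stmt4 (M : ℕ) (A AR : Matrix (Fin M) (Fin M) ℝ)
    (Ustar UR Fstar FR gstar gR : Fin M → ℝ) (SR SR' : ℝ)
    (Ut Ft UtR FtR : ℝ → ℝ → (Fin M → ℝ)) (xR : ℝ → ℝ)
    (hUt : ∀ ξ t, Ut ξ t = Ustar +
      t • ((ξ • (1 : Matrix (Fin M) (Fin M) ℝ) - A).mulVec gstar))
    (hFt : ∀ ξ t, Ft ξ t = Fstar +
      t • (A.mulVec ((ξ • (1 : Matrix (Fin M) (Fin M) ℝ) - A).mulVec gstar)))
    (hUtR : ∀ ξ t, UtR ξ t = UR +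
      t • ((ξ • (1 : Matrix (Fin M) (Fin M) ℝ) - AR).mulVec gR))
    (hFtR : ∀ ξ t, FtR ξ t = FR +
      t • (AR.mulVec ((ξ • (1 : Matrix (Fin M) (Fin M) ℝ) - AR).mulVec gR)))
    (hxR : ∀ t, xR t = SR * t + (1 / 2) * SR' * t ^ 2)
    (hRH0 : Fstar - FR = SR • (Ustar - UR)) :
    (∃ c : Fin M → ℝ, ∀ t : ℝ,
        Ft SR t - FtR SR t
          = (deriv xR t) • (Ut SR t - UtR SR t) + (t ^ 2) • c)
      ↔ ((SR • (1 : Matrix (Fin M) (Fin M) ℝ) - A) ^ 2).mulVec gstar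
          + SR' • (Ustar - UR)
        = ((SR • (1 : Matrix (Fin M) (Fin M) ℝ) - AR) ^ 2).mulVec gR := by
  set v := (SR • (1 : Matrix (Fin M) (Fin M) ℝ) - A) *ᵥ gstar
  set w := (SR • (1 : Matrix (Fin M) (Fin M) ℝ) - AR) *ᵥ gR
  have hF : ∀ t, Ft SR t - FtR SR t = (Fstar - FR) + t • (A *ᵥ v - AR *ᵥ w) := by
    intro t
    rw [hFt, hFtR]
    module
  have hU : ∀ t, Ut SR t - UtR SR t = (Ustar - UR) + t • (v - w) := by
    intro t
    rw [hUt, hUtR]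
    module
  simp only [show xR = _ from funext hxR, deriv_linear_add_half_mul_sq, hF, hU]
  rw [exists_forall_add_smul_eq_smul_add_sq_smul_iff, Matrix.sq_smul_one_sub_mulVec,
    Matrix.sq_smul_one_sub_mulVec]
  simp only [hRH0, true_and]
  constructor <;> intro h <;> linear_combination (norm := module) -h
end

section
/- For the piecewise path Ū(ξ) of the HLL Riemann solver with S_L < 0 < S_R, the left fluctuation D⁻ = ∫ over ξ∈[S_L−ε, 0] of −(Ū − d(ξŪ)/dξ) dξ equals S_L(U* − U_L) + O(ε), and the right fluctuation D⁺ over ξ∈[0, S_R+ε] equals S_R(U_R − U*) + O(ε); in particular in the limit ε → 0, D⁻ = S_L(U* − U_L) and D⁺ = S_R(U_R − U*). -/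
/-!
Wherever `Ū` is differentiable, `d(ξŪ)/dξ = Ū + ξŪ'`, so the integrand `-(Ū - d(ξŪ)/dξ)` is
`ξŪ'`; the finitely many kinks of `Ū` do not affect the integrals. On each piece of the path
`Ū'` is constant: `0` on the star state and `(U* - U_L)/ε`, `(U_R - U*)/ε` on the two layers.
Hence `D⁻ = ((S_L² - (S_L - ε)²) / 2ε) (U* - U_L) = (S_L - ε/2)(U* - U_L)` and likewise
`D⁺ = (S_R + ε/2)(U_R - U*)`, which converge as `ε → 0⁺`.
-/

open Set Filter Topology intervalIntegral

section Fluctuation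

variable {E : Type*} [NormedAddCommGroup E] [NormedSpace ℝ E]

theorem neg_sub_deriv_smul_self_eq {U : ℝ → E} {W : E} {ξ : ℝ} (h : HasDerivAt U W ξ) :
    -(U ξ - deriv (fun s => s • U s) ξ) = ξ • W := by
  rw [((hasDerivAt_id' ξ).fun_smul h).deriv, one_smul]
  abel

theorem eqOn_neg_sub_deriv_smul_self {U : ℝ → E} {W : E} {s : Set ℝ}
    (h : ∀ ξ ∈ s, HasDerivAt U W ξ) :
    EqOn (fun ξ => -(U ξ - deriv (fun s => s • U s) ξ)) (fun ξ => ξ • W) s :=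
  fun ξ hξ => neg_sub_deriv_smul_self_eq (h ξ hξ)

theorem intervalIntegrable_neg_sub_deriv_smul_self {U : ℝ → E} {W : E} {a b : ℝ}
    (h : ∀ ξ ∈ uIoo a b, HasDerivAt U W ξ) :
    IntervalIntegrable (fun ξ => -(U ξ - deriv (fun s => s • U s) ξ)) MeasureTheory.volume a b :=
  ((continuous_id.smul continuous_const).intervalIntegrable a b).congr_uIoo
    (eqOn_neg_sub_deriv_smul_self h).symm

variable [CompleteSpace E]

theorem integral_neg_sub_deriv_smul_self {U : ℝ → E} {W : E} {a b : ℝ}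
    (h : ∀ ξ ∈ uIoo a b, HasDerivAt U W ξ) :
    ∫ ξ in a..b, -(U ξ - deriv (fun s => s • U s) ξ) = ((b ^ 2 - a ^ 2) / 2) • W := by
  rw [integral_congr_uIoo (eqOn_neg_sub_deriv_smul_self h), intervalIntegral.integral_smul_const,
    integral_id]

theorem integral_neg_sub_deriv_smul_self_of_affine_pieces {U : ℝ → E} {W₁ W₂ : E} {a b c : ℝ}
    (h₁ : ∀ ξ ∈ uIoo a b, HasDerivAt U W₁ ξ) (h₂ : ∀ ξ ∈ uIoo b c, HasDerivAt U W₂ ξ) :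
    ∫ ξ in a..c, -(U ξ - deriv (fun s => s • U s) ξ) =
      ((b ^ 2 - a ^ 2) / 2) • W₁ + ((c ^ 2 - b ^ 2) / 2) • W₂ := by
  rw [← integral_add_adjacent_intervals (intervalIntegrable_neg_sub_deriv_smul_self h₁)
    (intervalIntegrable_neg_sub_deriv_smul_self h₂), integral_neg_sub_deriv_smul_self h₁,
    integral_neg_sub_deriv_smul_self h₂]

end Fluctuation

section HLLPath

variable {E : Type*} [NormedAddCommGroup E] [NormedSpace ℝ E]

noncomputable def hllPath (UL Us UR : E) (SL SR ε ξ : ℝ) : E :=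
  if ξ ≤ SL - ε then UL
  else if ξ < SL then UL + ((ξ - (SL - ε)) / ε) • (Us - UL)
  else if ξ ≤ SR then Us
  else if ξ < SR + ε then Us + ((ξ - SR) / ε) • (UR - Us)
  else UR

theorem hasDerivAt_add_div_smul (A V : E) (c ε ξ : ℝ) :
    HasDerivAt (fun s => A + ((s - c) / ε) • V) (ε⁻¹ • V) ξ := by
  simpa [div_eq_inv_mul] using
    ((((hasDerivAt_id' ξ).sub_const c).div_const ε).smul_const V).const_add A

variable (UL Us UR : E) {SL SR ε ξ : ℝ}

theorem hasDerivAt_hllPath_of_mem_Ioo_left (hξ : ξ ∈ Ioo (SL - ε) SL) :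
    HasDerivAt (hllPath UL Us UR SL SR ε) (ε⁻¹ • (Us - UL)) ξ := by
  refine (hasDerivAt_add_div_smul UL (Us - UL) (SL - ε) ε ξ).congr_of_eventuallyEq
    (eventually_of_mem (Ioo_mem_nhds hξ.1 hξ.2) fun s hs => ?_)
  rw [hllPath, if_neg (not_le.2 hs.1), if_pos hs.2]

theorem hasDerivAt_hllPath_of_mem_Ioo_star (hε : 0 ≤ ε) (hξ : ξ ∈ Ioo SL SR) :
    HasDerivAt (hllPath UL Us UR SL SR ε) 0 ξ := by
  refine (hasDerivAt_const ξ Us).congr_of_eventuallyEq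
    (eventually_of_mem (Ioo_mem_nhds hξ.1 hξ.2) fun s hs => ?_)
  rw [hllPath, if_neg (by linarith [hs.1]), if_neg (not_lt.2 hs.1.le), if_pos hs.2.le]

theorem hasDerivAt_hllPath_of_mem_Ioo_right (hε : 0 ≤ ε) (hS : SL ≤ SR)
    (hξ : ξ ∈ Ioo SR (SR + ε)) :
    HasDerivAt (hllPath UL Us UR SL SR ε) (ε⁻¹ • (UR - Us)) ξ := by
  refine (hasDerivAt_add_div_smul Us (UR - Us) SR ε ξ).congr_of_eventuallyEq
    (eventually_of_mem (Ioo_mem_nhds hξ.1 hξ.2) fun s hs => ?_)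
  rw [hllPath, if_neg (by linarith [hs.1]), if_neg (by linarith [hs.1]),
    if_neg (not_le.2 hs.1), if_pos hs.2]

variable [CompleteSpace E]

theorem integral_hllPath_fluctuation_left (hSL : SL ≤ 0) (hSR : 0 ≤ SR) (hε : 0 < ε) :
    ∫ ξ in (SL - ε)..0, -(hllPath UL Us UR SL SR ε ξ -
      deriv (fun s => s • hllPath UL Us UR SL SR ε s) ξ) = (SL - ε / 2) • (Us - UL) := by
  rw [integral_neg_sub_deriv_smul_self_of_affine_pieces (b := SL)
    (fun ξ hξ => hasDerivAt_hllPath_of_mem_Ioo_left UL Us UR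
      (by rwa [uIoo_of_le (by linarith)] at hξ))
    (fun ξ hξ => hasDerivAt_hllPath_of_mem_Ioo_star UL Us UR hε.le
      (Ioo_subset_Ioo_right hSR (by rwa [uIoo_of_le hSL] at hξ)))]
  rw [smul_zero, add_zero, smul_smul]
  congr 1
  field_simp
  ring

theorem integral_hllPath_fluctuation_right (hSL : SL ≤ 0) (hSR : 0 ≤ SR) (hε : 0 < ε) :
    ∫ ξ in 0..(SR + ε), -(hllPath UL Us UR SL SR ε ξ -
      deriv (fun s => s • hllPath UL Us UR SL SR ε s) ξ) = (SR + ε / 2) • (UR - Us) := by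
  rw [integral_neg_sub_deriv_smul_self_of_affine_pieces (b := SR)
    (fun ξ hξ => hasDerivAt_hllPath_of_mem_Ioo_star UL Us UR hε.le
      (Ioo_subset_Ioo_left hSL (by rwa [uIoo_of_le hSR] at hξ)))
    (fun ξ hξ => hasDerivAt_hllPath_of_mem_Ioo_right UL Us UR hε.le (hSL.trans hSR)
      (by rwa [uIoo_of_le (by linarith)] at hξ))]
  rw [smul_zero, zero_add, smul_smul]
  congr 1
  field_simp
  ring

end HLLPath

/-- The HLL fluctuations of the piecewise path `Ū` satisfy
`D⁻(ε) → S_L (U* − U_L)` and `D⁺(ε) → S_R (U_R − U*)` as `ε → 0⁺` (equations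
(3.10)–(3.11)), where `D∓` are the integrals of `−(Ū − d(ξ Ū)/dξ)` over
`[S_L − ε, 0]` and `[0, S_R + ε]` respectively. -/
theorem stmt9 (M : ℕ) (UL Us UR : Fin M → ℝ) (SL SR : ℝ)
    (hSL : SL < 0) (hSR : 0 < SR)
    (Ubar : ℝ → ℝ → (Fin M → ℝ))
    (hUbar : ∀ ε ξ, Ubar ε ξ =
      if ξ ≤ SL - ε then UL
      else if ξ < SL then UL + ((ξ - (SL - ε)) / ε) • (Us - UL)
      else if ξ ≤ SR then Us
      else if ξ < SR + ε then Us + ((ξ - SR) / ε) • (UR - Us)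
      else UR)
    (Dminus Dplus : ℝ → (Fin M → ℝ))
    (hDm : ∀ ε, Dminus ε =
      ∫ ξ in (SL - ε)..(0:ℝ), -(Ubar ε ξ - deriv (fun s => s • Ubar ε s) ξ))
    (hDp : ∀ ε, Dplus ε =
      ∫ ξ in (0:ℝ)..(SR + ε), -(Ubar ε ξ - deriv (fun s => s • Ubar ε s) ξ)) :
    Filter.Tendsto Dminus (nhdsWithin 0 (Set.Ioi 0)) (nhds (SL • (Us - UL))) ∧
      Filter.Tendsto Dplus (nhdsWithin 0 (Set.Ioi 0)) (nhds (SR • (UR - Us))) := by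
  obtain rfl : Ubar = hllPath UL Us UR SL SR := funext₂ hUbar
  constructor
  · refine Tendsto.congr' (eventually_nhdsWithin_of_forall fun ε hε => ?_)
      (((by fun_prop : Continuous fun ε : ℝ => (SL - ε / 2) • (Us - UL)).tendsto' 0 _
        (by simp)).mono_left nhdsWithin_le_nhds)
    rw [hDm, integral_hllPath_fluctuation_left UL Us UR hSL.le hSR.le hε]
  · refine Tendsto.congr' (eventually_nhdsWithin_of_forall fun ε hε => ?_)
      (((by fun_prop : Continuous fun ε : ℝ => (SR + ε / 2) • (UR - Us)).tendsto' 0 _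
        (by simp)).mono_left nhdsWithin_le_nhds)
    rw [hDp, integral_hllPath_fluctuation_right UL Us UR hSL.le hSR.le hε]
end
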